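/- arXiv:2512.14124 — 2 statements merged into one kernel-verified Lean document; each statement's English description precedes it below -/
import Mathlib

section
/- Let f : ℝ^m → ℝ ∪ {∞} be a proper convex function with x̄ ∈ dom f and ū ∈ ∂f(x̄). If d ∈ ℝ^m satisfies d²f(x̄, ū)(d) < ∞, then the first-order directional derivative of f at x̄ in direction d equals ⟨ū, d⟩; that is, dom d²f(x̄, ū) ⊆ {d | df(x̄)(d) = ⟨ū, d⟩}. -/
open scoped RealInnerProductSpace Topology

/-- Second-order subderivative `d²f(x̄,ū)(d)` (with `f x̄ = r ∈ ℝ`). -/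
noncomputable def secondSubderiv {m : ℕ} (f : EuclideanSpace ℝ (Fin m) → EReal)
    (x : EuclideanSpace ℝ (Fin m)) (r : ℝ) (u d : EuclideanSpace ℝ (Fin m)) : EReal :=
  Filter.liminf
    (fun p : ℝ × EuclideanSpace ℝ (Fin m) =>
      ((2 / p.1 ^ 2 : ℝ) : EReal) * (f (x + p.1 • p.2) - ((r + p.1 * ⟪u, p.2⟫ : ℝ) : EReal)))
    ((𝓝[>] (0 : ℝ)) ×ˢ 𝓝 d)

/-- First-order subderivative `df(x̄)(d)` (with `f x̄ = r ∈ ℝ`). -/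
noncomputable def firstSubderiv {m : ℕ} (f : EuclideanSpace ℝ (Fin m) → EReal)
    (x : EuclideanSpace ℝ (Fin m)) (r : ℝ) (d : EuclideanSpace ℝ (Fin m)) : EReal :=
  Filter.liminf
    (fun p : ℝ × EuclideanSpace ℝ (Fin m) =>
      ((p.1⁻¹ : ℝ) : EReal) * (f (x + p.1 • p.2) - (r : EReal)))
    ((𝓝[>] (0 : ℝ)) ×ˢ 𝓝 d)

/-! For `t > 0` the two difference quotients are linked by `q₁ = ⟨u, d'⟩ + (t / 2) q₂`. The
subgradient inequality gives `q₂ ≥ 0`, hence `q₁ ≥ ⟨u, d'⟩`. If `liminf q₂ < M`, then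
`q₂ < M` frequently, and there `q₁ ≤ ⟨u, d'⟩ + M t / 2`. Both bounds tend to `⟨u, d⟩`. -/

open Filter

theorem liminf_eq_of_eventually_ge_of_frequently_le {α β : Type*} [CompleteLinearOrder β]
    [DenselyOrdered β] [TopologicalSpace β] [OrderTopology β] {l : Filter α} [NeBot l]
    {q v w : α → β} {c : β} (hv : Tendsto v l (𝓝 c)) (hw : Tendsto w l (𝓝 c))
    (hqv : ∀ᶠ a in l, v a ≤ q a) (hqw : ∃ᶠ a in l, q a ≤ w a) :
    liminf q l = c := by
  refine le_antisymm (le_of_forall_gt_imp_ge_of_dense fun b hcb => ?_) ?_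
  · refine liminf_le_of_frequently_le' ?_
    exact (hqw.and_eventually (hw.eventually_lt_const hcb)).mono fun a h => h.1.trans h.2.le
  · exact hv.liminf_eq ▸ liminf_le_liminf hqv

theorem coe_le_inv_mul_sub_of_coe_add_mul_le {r t a : ℝ} {e : EReal} (ht : 0 < t)
    (h : ((r + t * a : ℝ) : EReal) ≤ e) : (a : EReal) ≤ ((t⁻¹ : ℝ) : EReal) * (e - r) := by
  induction e using EReal.rec with
  | bot => exact absurd h (not_le.2 (EReal.bot_lt_coe _))
  | top =>
    rw [EReal.top_sub_coe, EReal.mul_top_of_pos (EReal.coe_pos.2 (inv_pos.2 ht))]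
    exact le_top
  | coe s =>
    rw [← EReal.coe_sub, ← EReal.coe_mul, EReal.coe_le_coe_iff, inv_mul_eq_div, le_div_iff₀ ht]
    have := EReal.coe_le_coe_iff.1 h
    linarith

theorem inv_mul_sub_le_of_two_div_sq_mul_sub_lt {r t a M : ℝ} {e : EReal} (ht : 0 < t)
    (h : ((2 / t ^ 2 : ℝ) : EReal) * (e - ((r + t * a : ℝ) : EReal)) < M) :
    ((t⁻¹ : ℝ) : EReal) * (e - r) ≤ ((a + M / 2 * t : ℝ) : EReal) := by
  induction e using EReal.rec with
  | bot => simp [EReal.bot_sub, EReal.mul_bot_of_pos (EReal.coe_pos.2 (inv_pos.2 ht))]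
  | top =>
    have h_coeff : (0 : EReal) < ((2 / t ^ 2 : ℝ) : EReal) := EReal.coe_pos.2 (by positivity)
    rw [EReal.top_sub_coe, EReal.mul_top_of_pos h_coeff] at h
    exact absurd h not_top_lt
  | coe s =>
    rw [← EReal.coe_sub, ← EReal.coe_mul, EReal.coe_lt_coe_iff, div_mul_eq_mul_div,
      div_lt_iff₀ (by positivity)] at h
    rw [← EReal.coe_sub, ← EReal.coe_mul, EReal.coe_le_coe_iff, inv_mul_eq_div, div_le_iff₀ ht]
    nlinarith

theorem coe_add_mul_inner_le {E : Type*} [NormedAddCommGroup E] [InnerProductSpace ℝ E]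
    {f : E → EReal} {x u : E} {r : ℝ} (hx : f x = r)
    (hu : ∀ y, f x + ((⟪u, y - x⟫ : ℝ) : EReal) ≤ f y) (t : ℝ) (d : E) :
    ((r + t * ⟪u, d⟫ : ℝ) : EReal) ≤ f (x + t • d) := by
  simpa [hx, real_inner_smul_right] using hu (x + t • d)

theorem stmt5_general {m : ℕ} (f : EuclideanSpace ℝ (Fin m) → EReal)
    (x u : EuclideanSpace ℝ (Fin m)) (r : ℝ) (hx : f x = (r : EReal))
    (hu : ∀ y, f x + ((⟪u, y - x⟫ : ℝ) : EReal) ≤ f y) :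
    ∀ d, secondSubderiv f x r u d < ⊤ →
      firstSubderiv f x r d = ((⟪u, d⟫ : ℝ) : EReal) := by
  intro d hd
  obtain ⟨M, hM, -⟩ := EReal.exists_between_coe_real hd
  have ht_pos : ∀ᶠ p : ℝ × EuclideanSpace ℝ (Fin m) in 𝓝[>] 0 ×ˢ 𝓝 d, 0 < p.1 :=
    Eventually.prod_inl self_mem_nhdsWithin _
  have h_inner : Tendsto (fun p : ℝ × EuclideanSpace ℝ (Fin m) => ⟪u, p.2⟫)
      (𝓝[>] 0 ×ˢ 𝓝 d) (𝓝 ⟪u, d⟫) := tendsto_const_nhds.inner tendsto_snd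
  have h_t : Tendsto (fun p : ℝ × EuclideanSpace ℝ (Fin m) => p.1) (𝓝[>] 0 ×ˢ 𝓝 d) (𝓝 0) :=
    tendsto_fst.mono_right nhdsWithin_le_nhds
  have h_second : ∃ᶠ p in 𝓝[>] 0 ×ˢ 𝓝 d,
      ((2 / p.1 ^ 2 : ℝ) : EReal) * (f (x + p.1 • p.2) - ((r + p.1 * ⟪u, p.2⟫ : ℝ) : EReal)) < M :=
    frequently_lt_of_liminf_lt (by isBoundedDefault) hM
  have h_w : Tendsto (fun p : ℝ × EuclideanSpace ℝ (Fin m) => ⟪u, p.2⟫ + M / 2 * p.1)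
      (𝓝[>] 0 ×ˢ 𝓝 d) (𝓝 ⟪u, d⟫) := by
    simpa using h_inner.add (h_t.const_mul (M / 2))
  apply liminf_eq_of_eventually_ge_of_frequently_le
    (continuous_coe_real_ereal.tendsto _ |>.comp h_inner)
    (continuous_coe_real_ereal.tendsto _ |>.comp h_w)
  · filter_upwards [ht_pos] with p hp
    exact coe_le_inv_mul_sub_of_coe_add_mul_le hp (coe_add_mul_inner_le hx hu p.1 p.2)
  · exact (h_second.and_eventually ht_pos).mono
      fun p h => inv_mul_sub_le_of_two_div_sq_mul_sub_lt h.2 h.1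

theorem stmt5 {m : ℕ} (f : EuclideanSpace ℝ (Fin m) → EReal)
    (hbot : ∀ x, f x ≠ ⊥) (hfin : ∃ x, f x ≠ ⊤)
    (hconv : ∀ x y : EuclideanSpace ℝ (Fin m), ∀ a b : ℝ, 0 ≤ a → 0 ≤ b → a + b = 1 →
      f (a • x + b • y) ≤ (a : EReal) * f x + (b : EReal) * f y)
    (x u : EuclideanSpace ℝ (Fin m)) (r : ℝ) (hx : f x = (r : EReal))
    (hu : ∀ y, f x + ((⟪u, y - x⟫ : ℝ) : EReal) ≤ f y) :
    ∀ d, secondSubderiv f x r u d < ⊤ →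
      firstSubderiv f x r d = ((⟪u, d⟫ : ℝ) : EReal) :=
  stmt5_general f x u r hx hu
end

section
/- Abstract form of the SSOSC-implies-nonsingularity argument: Let A ∈ ℝ^{n×n} be symmetric, B ∈ ℝ^{m×n}, and U ∈ ℝ^{m×m}. Define Γ : ℝ^m → ℝ ∪ {∞} by Γ(v) := inf { ⟨v, d − v⟩ | d ∈ ℝ^m, v = U d } (with Γ(v) = +∞ if v ∉ rge U). Suppose (Δx, Δu) ∈ ℝ^n × ℝ^m satisfies A Δx + Bᵀ Δu = 0 and B Δx = U(B Δx + Δu), and suppose that ⟨A d, d⟩ + Γ(B d) > 0 for all d ≠ 0 with B d ∈ rge U. Then Δx = 0. -/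
open Matrix

/-- The second-order variational function `Γ(v) := inf {⟨v, d − v⟩ | v = U d}`,
with value `+∞` when `v ∉ rge U`. -/
noncomputable def Gam {m : ℕ} (U : Matrix (Fin m) (Fin m) ℝ) (v : Fin m → ℝ) : EReal :=
  ⨅ d ∈ {d : Fin m → ℝ | v = U.mulVec d}, ((v ⬝ᵥ (d - v) : ℝ) : EReal)

theorem Gam_le_dotProduct_sub {m : ℕ} (U : Matrix (Fin m) (Fin m) ℝ) {v d : Fin m → ℝ}
    (h : v = U *ᵥ d) : Gam U v ≤ ((v ⬝ᵥ (d - v) : ℝ) : EReal) :=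
  iInf₂_le d h

theorem mulVec_dotProduct_self_eq_neg_of_add_transpose_mulVec_eq_zero
    {R ι κ : Type*} [CommRing R] [Fintype ι] [Fintype κ]
    (A : Matrix ι ι R) (B : Matrix κ ι R) {x : ι → R} {u : κ → R}
    (h : A *ᵥ x + Bᵀ *ᵥ u = 0) : A *ᵥ x ⬝ᵥ x = -(B *ᵥ x ⬝ᵥ u) := by
  rw [eq_neg_of_add_eq_zero_left h, neg_dotProduct, mulVec_transpose,
    ← dotProduct_mulVec, dotProduct_comm]

theorem stmt12_general {n m : ℕ} (A : Matrix (Fin n) (Fin n) ℝ)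
    (B : Matrix (Fin m) (Fin n) ℝ) (U : Matrix (Fin m) (Fin m) ℝ)
    (Δx : Fin n → ℝ) (Δu : Fin m → ℝ)
    (heq1 : A.mulVec Δx + Bᵀ.mulVec Δu = 0)
    (heq2 : B.mulVec Δx = U.mulVec (B.mulVec Δx + Δu))
    (hSSOSC : ∀ d : Fin n → ℝ, d ≠ 0 → (∃ w, U.mulVec w = B.mulVec d) →
      (0 : EReal) < ((A.mulVec d ⬝ᵥ d : ℝ) : EReal) + Gam U (B.mulVec d)) :
    Δx = 0 := by
  by_contra hne
  have hpos := hSSOSC Δx hne ⟨_, heq2.symm⟩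
  have hGam : Gam U (B *ᵥ Δx) ≤ ((B *ᵥ Δx ⬝ᵥ Δu : ℝ) : EReal) := by
    simpa using Gam_le_dotProduct_sub U heq2
  rw [mulVec_dotProduct_self_eq_neg_of_add_transpose_mulVec_eq_zero A B heq1] at hpos
  have hle : ((-(B *ᵥ Δx ⬝ᵥ Δu) : ℝ) : EReal) + Gam U (B *ᵥ Δx) ≤ 0 :=
    calc ((-(B *ᵥ Δx ⬝ᵥ Δu) : ℝ) : EReal) + Gam U (B *ᵥ Δx)
        ≤ ((-(B *ᵥ Δx ⬝ᵥ Δu) : ℝ) : EReal) + ((B *ᵥ Δx ⬝ᵥ Δu : ℝ) : EReal) := by gcongr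
      _ = 0 := by rw [← EReal.coe_add, neg_add_cancel, EReal.coe_zero]
  exact hpos.not_ge hle

theorem stmt12 {n m : ℕ} (A : Matrix (Fin n) (Fin n) ℝ) (hA : A.IsSymm)
    (B : Matrix (Fin m) (Fin n) ℝ) (U : Matrix (Fin m) (Fin m) ℝ)
    (Δx : Fin n → ℝ) (Δu : Fin m → ℝ)
    (heq1 : A.mulVec Δx + Bᵀ.mulVec Δu = 0)
    (heq2 : B.mulVec Δx = U.mulVec (B.mulVec Δx + Δu))
    (hSSOSC : ∀ d : Fin n → ℝ, d ≠ 0 → (∃ w, U.mulVec w = B.mulVec d) →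
      (0 : EReal) < ((A.mulVec d ⬝ᵥ d : ℝ) : EReal) + Gam U (B.mulVec d)) :
    Δx = 0 :=
  stmt12_general A B U Δx Δu heq1 heq2 hSSOSC
end
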